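/- If π ∧ ρ ≠ 0_n in NC(n), then the meandric system M_{π,ρ} is reducible, i.e., there exists a proper subinterval of {1,...,2n} invariant under M_{π,ρ}. -/

import Mathlib

/-!
A block common to `π` and `ρ` contains two points `i < j`, and then `{2i, …, 2j-1}` is invariant.
By non-crossingness, a block of `π` or `ρ` that meets `(i, j)` without containing `i` lies inside
`(i, j)`; hence `P_π⁻¹` maps `(i, j]` into `[i, j)` and `P_ρ` maps `[i, j)` into `(i, j]`, so the
odd points `2k-1` (`k ∈ (i, j]`) and the even points `2k` (`k ∈ [i, j)`) of the interval are sent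
back into it.
-/

open scoped Classical

/-- A setoid (partition) of `Fin n` is non-crossing if there is no crossing
`a < b < c < d` with `a ∼ c`, `b ∼ d` but `a` and `b` in distinct blocks. -/
def IsNC {n : ℕ} (S : Setoid (Fin n)) : Prop :=
  ∀ a b c d : Fin n, a < b → b < c → c < d → S.r a c → S.r b d → S.r a b

/-- A partition is a pairing if every block has exactly two elements. -/
def IsPairing {m : ℕ} (T : Setoid (Fin m)) : Prop :=
  ∀ x : Fin m, ∃ y : Fin m, y ≠ x ∧ T.r x y ∧ ∀ z : Fin m, T.r x z → z = x ∨ z = y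

/-- The block of `i` in the partition `S`, as a finset. -/
noncomputable def blockOf {n : ℕ} (S : Setoid (Fin n)) (i : Fin n) : Finset (Fin n) :=
  Finset.univ.filter (fun j => S.r i j)

lemma blockOf_nonempty {n : ℕ} (S : Setoid (Fin n)) (i : Fin n) :
    (blockOf S i).Nonempty :=
  ⟨i, by simp [blockOf, S.iseqv.refl i]⟩

/-- The permutation `P_S` which performs an increasing cycle on every block of `S`:
it sends `i` to the next larger element of its block, or to the minimum of the
block if `i` is the largest element of its block. -/
noncomputable def nextP {n : ℕ} (S : Setoid (Fin n)) (i : Fin n) : Fin n :=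
  if h : ((blockOf S i).filter (fun j => i < j)).Nonempty
  then ((blockOf S i).filter (fun j => i < j)).min' h
  else (blockOf S i).min' (blockOf_nonempty S i)

/-- The inverse permutation `P_S⁻¹` (decreasing cycle on every block of `S`). -/
noncomputable def prevP {n : ℕ} (S : Setoid (Fin n)) (i : Fin n) : Fin n :=
  if h : ((blockOf S i).filter (fun j => j < i)).Nonempty
  then ((blockOf S i).filter (fun j => j < i)).max' h
  else (blockOf S i).max' (blockOf_nonempty S i)

/-- `0`-indexed version of the point `2i-1` of `{1,…,2n}`. -/
def dEven {n : ℕ} (j : Fin n) : Fin (2*n) := ⟨2*j.val, by have := j.isLt; omega⟩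

/-- `0`-indexed version of the point `2i` of `{1,…,2n}`. -/
def dOdd {n : ℕ} (j : Fin n) : Fin (2*n) := ⟨2*j.val+1, by have := j.isLt; omega⟩

/-- The doubling construction `π ↦ A(π)`: the pairing of `{1,…,2n}` generated by
pairing each point `2i` with `2P_π(i) - 1`, so that the associated permutation
satisfies `P_{A(π)}(2i) = 2P_π(i) - 1` and `P_{A(π)}(2i-1) = 2P_π⁻¹(i)`. -/
noncomputable def archSetoid {n : ℕ} (S : Setoid (Fin n)) : Setoid (Fin (2*n)) :=
  Relation.EqvGen.setoid (fun a b => ∃ j : Fin n, a = dOdd j ∧ b = dEven (nextP S j))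

/-- The meandric system permutation `M_{π,ρ} ∈ S_{2n}`, defined by
`M_{π,ρ}(2i-1) = 2P_π⁻¹(i)` and `M_{π,ρ}(2i) = 2P_ρ(i) - 1` (here `0`-indexed). -/
noncomputable def meanderMap {n : ℕ} (π ρ : Setoid (Fin n)) (x : Fin (2*n)) : Fin (2*n) :=
  if x.val % 2 = 0
  then dOdd (prevP π ⟨x.val / 2, by have := x.isLt; omega⟩)
  else dEven (nextP ρ ⟨x.val / 2, by have := x.isLt; omega⟩)

/-- The orbit partition of a map. -/
def orbitSetoid {m : ℕ} (f : Fin m → Fin m) : Setoid (Fin m) :=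
  Relation.EqvGen.setoid (fun a b => f a = b)

/-- Number of orbits of a map. -/
noncomputable def numOrbits {m : ℕ} (f : Fin m → Fin m) : ℕ :=
  Nat.card (Quotient (orbitSetoid f))

/-- `S` is a union of blocks of the partition `T`. -/
def IsBlockUnion {m : ℕ} (T : Setoid (Fin m)) (S : Set (Fin m)) : Prop :=
  ∀ x ∈ S, ∀ y, T.r x y → y ∈ S

/-- `S` is invariant under `f`. -/
def MInvariant {m : ℕ} (f : Fin m → Fin m) (S : Set (Fin m)) : Prop :=
  ∀ x ∈ S, f x ∈ S

/-- The meandric system `M_{π,ρ}` is reducible: some proper subinterval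
`{a,…,b}` of `{1,…,2n}` is invariant under `M_{π,ρ}`. -/
noncomputable def Reducible {n : ℕ} (π ρ : Setoid (Fin n)) : Prop :=
  ∃ a b : Fin (2*n), a ≤ b ∧ b.val - a.val < 2*n - 1 ∧
    MInvariant (meanderMap π ρ) {x | a ≤ x ∧ x ≤ b}

/-- The join in the lattice of non-crossing partitions: the smallest
non-crossing partition above both `π` and `ρ`. -/
noncomputable def ncJoin {m : ℕ} (π ρ : Setoid (Fin m)) : Setoid (Fin m) :=
  sInf {τ | IsNC τ ∧ π ≤ τ ∧ ρ ≤ τ}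

/-- The moment-cumulant formula of free probability: `mom n` is the sum over all
non-crossing partitions of `{1,…,n}` of the products of cumulants `κ` indexed
by the block sizes.  This uniquely determines the free cumulants `κ n`, `n ≥ 1`,
of a sequence of moments. -/
def MomCum {F : Type*} [Field F] (mom κ : ℕ → F) : Prop :=
  ∀ n : ℕ, 0 < n →
    mom n = ∑ᶠ S ∈ {S : Setoid (Fin n) | IsNC S}, ∏ᶠ B ∈ Setoid.classes S, κ B.ncard

/-- The number of irreducible meandric systems on `2k` bridges, described as the
number of pairs `(π,ρ) ∈ NC(k)²` with `π ∨ ρ = 1_k`, `π ∧ ρ = 0_k`. -/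
noncomputable def mirr (k : ℕ) : ℕ :=
  Nat.card {pr : Setoid (Fin k) × Setoid (Fin k) //
    IsNC pr.1 ∧ IsNC pr.2 ∧ ncJoin pr.1 pr.2 = ⊤ ∧ pr.1 ⊓ pr.2 = ⊥}

/-- The number of pairs `(π,ρ) ∈ NC(n)²` whose meandric system `M_{π,ρ}` has
exactly `k` orbits (connected components). -/
noncomputable def mcount (n k : ℕ) : ℕ :=
  Nat.card {pr : Setoid (Fin n) × Setoid (Fin n) //
    IsNC pr.1 ∧ IsNC pr.2 ∧ numOrbits (meanderMap pr.1 pr.2) = k}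

/-- The number of meanders on `2n` bridges. -/
noncomputable def meanderNum (n : ℕ) : ℕ := mcount n 1

lemma Setoid.exists_lt_rel_of_inf_ne_bot {α : Type*} [LinearOrder α] {r s : Setoid α}
    (h : r ⊓ s ≠ ⊥) : ∃ i j, i < j ∧ r i j ∧ s i j := by
  contrapose! h
  refine le_bot_iff.mp fun a b hab => ?_
  replace hab : r a b ∧ s a b := hab
  rcases lt_trichotomy a b with hlt | rfl | hgt
  · exact absurd hab.2 (h a b hlt hab.1)
  · exact (⊥ : Setoid α).refl a
  · exact absurd (s.symm hab.2) (h b a hgt (r.symm hab.1))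

section BlockCycles

variable {n : ℕ} {S : Setoid (Fin n)} {i j k m : Fin n}

lemma mem_blockOf : j ∈ blockOf S i ↔ S.r i j := by simp [blockOf]

lemma rel_prevP (S : Setoid (Fin n)) (k : Fin n) : S.r k (prevP S k) := by
  unfold prevP
  split_ifs with hne
  · exact mem_blockOf.mp (Finset.mem_filter.mp (Finset.max'_mem _ hne)).1
  · exact mem_blockOf.mp (Finset.max'_mem _ _)

lemma rel_nextP (S : Setoid (Fin n)) (k : Fin n) : S.r k (nextP S k) := by
  unfold nextP
  split_ifs with hne
  · exact mem_blockOf.mp (Finset.mem_filter.mp (Finset.min'_mem _ hne)).1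
  · exact mem_blockOf.mp (Finset.min'_mem _ _)

lemma prevP_mem_Ico_of_rel (hik : S.r i k) (hlt : i < k) : prevP S k ∈ Set.Ico i k := by
  have hmem : i ∈ (blockOf S k).filter (· < k) :=
    Finset.mem_filter.mpr ⟨mem_blockOf.mpr (S.symm hik), hlt⟩
  have hne : ((blockOf S k).filter (· < k)).Nonempty := ⟨i, hmem⟩
  rw [prevP, dif_pos hne]
  exact ⟨Finset.le_max' _ i hmem, (Finset.mem_filter.mp (Finset.max'_mem _ hne)).2⟩

lemma nextP_mem_Ioc_of_rel (hkj : S.r k j) (hlt : k < j) : nextP S k ∈ Set.Ioc k j := by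
  have hmem : j ∈ (blockOf S k).filter (k < ·) :=
    Finset.mem_filter.mpr ⟨mem_blockOf.mpr hkj, hlt⟩
  have hne : ((blockOf S k).filter (k < ·)).Nonempty := ⟨j, hmem⟩
  rw [nextP, dif_pos hne]
  exact ⟨(Finset.mem_filter.mp (Finset.min'_mem _ hne)).2, Finset.min'_le _ j hmem⟩

lemma IsNC.mem_Ioo_of_rel (hS : IsNC S) (hij : S.r i j) (hk : k ∈ Set.Ioo i j) (hkm : S.r k m)
    (hik : ¬ S.r i k) : m ∈ Set.Ioo i j := by
  obtain ⟨hik', hkj⟩ := hk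
  rcases lt_trichotomy m i with hmi | rfl | him
  · exact absurd (S.trans (S.symm (hS m i k j hmi hik' hkj (S.symm hkm) hij)) (S.symm hkm)) hik
  · exact absurd (S.symm hkm) hik
  rcases lt_trichotomy m j with hmj | rfl | hjm
  · exact ⟨him, hmj⟩
  · exact absurd (S.trans hij (S.symm hkm)) hik
  · exact absurd (hS i k j m hik' hkj hjm hij hkm) hik

lemma IsNC.prevP_mem_Ico (hS : IsNC S) (hij : S.r i j) (hk : k ∈ Set.Ioc i j) :
    prevP S k ∈ Set.Ico i j := by
  by_cases hik : S.r i k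
  · obtain ⟨hle, hlt⟩ := prevP_mem_Ico_of_rel hik hk.1
    exact ⟨hle, hlt.trans_le hk.2⟩
  · have hkj : k < j := hk.2.lt_of_ne (by rintro rfl; exact hik hij)
    exact Set.Ioo_subset_Ico_self (hS.mem_Ioo_of_rel hij ⟨hk.1, hkj⟩ (rel_prevP S k) hik)

lemma IsNC.nextP_mem_Ioc (hS : IsNC S) (hij : S.r i j) (hk : k ∈ Set.Ico i j) :
    nextP S k ∈ Set.Ioc i j := by
  by_cases hik : S.r i k
  · obtain ⟨hlt, hle⟩ := nextP_mem_Ioc_of_rel (S.trans (S.symm hik) hij) hk.2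
    exact ⟨hk.1.trans_lt hlt, hle⟩
  · have hik' : i < k := hk.1.lt_of_ne (by rintro rfl; exact hik (S.refl i))
    exact Set.Ioo_subset_Ioc_self (hS.mem_Ioo_of_rel hij ⟨hik', hk.2⟩ (rel_nextP S k) hik)

end BlockCycles

section Doubling

variable {n : ℕ} {i j p : Fin n}

lemma dOdd_mem_Icc (hp : p ∈ Set.Ico i j) : dOdd p ∈ Set.Icc (dOdd i) (dEven j) := by
  obtain ⟨hip, hpj⟩ := hp
  constructor <;> simp only [Fin.le_def, dOdd, dEven] <;> omega

lemma dEven_mem_Icc (hp : p ∈ Set.Ioc i j) : dEven p ∈ Set.Icc (dOdd i) (dEven j) := by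
  obtain ⟨hip, hpj⟩ := hp
  constructor <;> simp only [Fin.le_def, dOdd, dEven] <;> omega

lemma meanderMap_mInvariant_Icc {π ρ : Setoid (Fin n)} (hπ : IsNC π) (hρ : IsNC ρ)
    (hπij : π.r i j) (hρij : ρ.r i j) :
    MInvariant (meanderMap π ρ) (Set.Icc (dOdd i) (dEven j)) := by
  rintro x ⟨hix, hxj⟩
  simp only [Fin.le_def, dOdd, dEven] at hix hxj
  unfold meanderMap
  split_ifs with hx
  · refine dOdd_mem_Icc (hπ.prevP_mem_Ico hπij ⟨?_, ?_⟩) <;>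
      simp only [Fin.lt_def, Fin.le_def] <;> omega
  · refine dEven_mem_Icc (hρ.nextP_mem_Ioc hρij ⟨?_, ?_⟩) <;>
      simp only [Fin.lt_def, Fin.le_def] <;> omega

end Doubling

/-- If `π ∧ ρ ≠ 0_n` in `NC(n)` then `M_{π,ρ}` is reducible. -/
theorem reducible_of_meet_ne_bot (n : ℕ) (π ρ : Setoid (Fin n))
    (hπ : IsNC π) (hρ : IsNC ρ) (h : π ⊓ ρ ≠ ⊥) :
    Reducible π ρ := by
  obtain ⟨i, j, hij, hπij, hρij⟩ := Setoid.exists_lt_rel_of_inf_ne_bot h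
  refine ⟨dOdd i, dEven j, ?_, ?_, meanderMap_mInvariant_Icc hπ hρ hπij hρij⟩ <;>
    simp only [Fin.le_def, dOdd, dEven] <;> omega
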